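/- Let G be a Δ-regular finite simple graph of order n and size m with Δ ≥ 3 and 2Δ ≤ n ≤ 2Δ+1. Then n ≤ A_{Δ−2}(G) ≤ n + m + 2. -/

import Mathlib

/-!
In a `Δ`-regular graph, `S` is an exact `(Δ - 2)`-alliance iff `⟨S⟩` is connected, every vertex
of `S` has at most one neighbour outside `S`, and some vertex has exactly one. When
`n ≤ 2Δ + 1`, deleting a single vertex leaves the graph connected, so the `n` complements of
vertices are such alliances.

Conversely, write `T = Sᶜ` and count the edges between `S` and `T`: since `2Δ ≤ n ≤ 2Δ + 1`,
either `S` is a `Δ`-clique, or `T` is a vertex, an edge, a triangle or a `Δ`-clique. Vertices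
account for at most `n` alliances, and each edge `T` for at most one. A triangle or `Δ`-clique
occurring here (at most twice, as `S` and as `T`) contains at least three edges whose
complements are not alliances, and no two such cliques share an edge, so these alliances are
paid for by edges not counted otherwise: `A_{Δ-2}(G) ≤ n + m`.
-/

open Polynomial Finset

/-- Number of neighbors of `v` inside the set `S` (denoted δ_S(v)). -/
def SimpleGraph.degIn {V : Type*} [Fintype V] [DecidableEq V]
    (G : SimpleGraph V) [DecidableRel G.Adj] (S : Finset V) (v : V) : ℕ :=
  (S.filter (fun u => G.Adj v u)).card

/-- Number of neighbors of `v` outside the set `S` (denoted δ_{S̄}(v)). -/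
def SimpleGraph.degOut {V : Type*} [Fintype V] [DecidableEq V]
    (G : SimpleGraph V) [DecidableRel G.Adj] (S : Finset V) (v : V) : ℕ :=
  (Sᶜ.filter (fun u => G.Adj v u)).card

/-- `S` is an exact defensive `k`-alliance in `G`: the induced subgraph `⟨S⟩` is connected
(in particular `S` is nonempty) and `k = k_S = min_{v ∈ S} (δ_S(v) - δ_{S̄}(v))`. -/
def SimpleGraph.IsExactAlliance {V : Type*} [Fintype V] [DecidableEq V]
    (G : SimpleGraph V) [DecidableRel G.Adj] (S : Finset V) (k : ℤ) : Prop :=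
  (G.induce (S : Set V)).Connected ∧
    (∀ v ∈ S, k ≤ (G.degIn S v : ℤ) - (G.degOut S v : ℤ)) ∧
    (∃ v ∈ S, (G.degIn S v : ℤ) - (G.degOut S v : ℤ) = k)

/-- `A_k(G)`: the number of exact defensive `k`-alliances in `G`. -/
noncomputable def SimpleGraph.allianceCoeff {V : Type*} [Fintype V] [DecidableEq V]
    (G : SimpleGraph V) [DecidableRel G.Adj] (k : ℤ) : ℕ :=
  Set.ncard {S : Finset V | G.IsExactAlliance S k}

/-- The alliance polynomial `A(G;x) = Σ_{k=-Δ}^{Δ} A_k(G) x^{n+k}`, where `n` is the order and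
`Δ` the maximum degree of `G`, regarded as a real polynomial. -/
noncomputable def SimpleGraph.alliancePoly {V : Type*} [Fintype V] [DecidableEq V]
    (G : SimpleGraph V) [DecidableRel G.Adj] : Polynomial ℝ :=
  ∑ k ∈ Finset.Icc (-(G.maxDegree : ℤ)) (G.maxDegree : ℤ),
    (G.allianceCoeff k : ℝ) • X ^ (((Fintype.card V : ℤ) + k).toNat)

lemma Finset.three_mul_card_le_card_biUnion_powersetCard_two {α : Type*} [DecidableEq α]
    {F : Finset (Finset α)} (h3 : ∀ M ∈ F, 3 ≤ M.card)
    (hF : ∀ M ∈ F, ∀ M' ∈ F, ∀ D, D ⊆ M → D ⊆ M' → D.card = 2 → M = M') :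
    3 * F.card ≤ (F.biUnion (powersetCard 2)).card := by
  rw [card_biUnion fun M hM M' hM' hne => Finset.disjoint_left.2 fun D hD hD' => hne <| by
    rw [mem_powersetCard] at hD hD'
    exact hF M hM M' hM' D hD.1 hD'.1 hD.2]
  calc 3 * F.card = ∑ _M ∈ F, Nat.choose 3 2 := by simp [mul_comm]
    _ ≤ ∑ M ∈ F, (M.powersetCard 2).card := sum_le_sum fun M hM => by
      rw [card_powersetCard]
      exact Nat.choose_le_choose 2 (h3 M hM)

namespace SimpleGraph

variable {V : Type*} [Fintype V] [DecidableEq V] (G : SimpleGraph V) [DecidableRel G.Adj]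

lemma card_le_degIn {A S : Finset V} {v : V} (hAS : A ⊆ S) (hadj : ∀ a ∈ A, G.Adj v a) :
    A.card ≤ G.degIn S v :=
  card_le_card fun a ha => mem_filter.2 ⟨hAS ha, hadj a ha⟩

lemma degIn_lt_card {S : Finset V} {v : V} (hv : v ∈ S) : G.degIn S v < S.card :=
  card_lt_card (filter_ssubset.2 ⟨v, hv, G.irrefl⟩)

lemma sum_degIn_add_card_le (T : Finset V) :
    ∑ v ∈ T, G.degIn T v + T.card ≤ T.card * T.card := by
  calc ∑ v ∈ T, G.degIn T v + T.card = ∑ v ∈ T, (G.degIn T v + 1) := by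
        rw [sum_add_distrib, card_eq_sum_ones]
    _ ≤ ∑ _v ∈ T, T.card := sum_le_sum fun v hv => G.degIn_lt_card hv
    _ = T.card * T.card := by rw [sum_const, smul_eq_mul]

lemma sum_degIn_comm (A B : Finset V) : ∑ a ∈ A, G.degIn B a = ∑ b ∈ B, G.degIn A b := by
  simpa [degIn, bipartiteAbove, bipartiteBelow, G.adj_comm] using
    sum_card_bipartiteAbove_eq_sum_card_bipartiteBelow (s := A) (t := B) G.Adj

lemma degOut_eq_degIn_compl (S : Finset V) (v : V) : G.degOut S v = G.degIn Sᶜ v := rfl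

lemma sum_degOut_compl (S : Finset V) :
    ∑ v ∈ Sᶜ, G.degOut Sᶜ v = ∑ v ∈ S, G.degOut S v := by
  simpa only [degOut_eq_degIn_compl, compl_compl] using G.sum_degIn_comm Sᶜ S

lemma degree_induce_eq_degIn (T : Finset V) (v : (T : Set V)) :
    (G.induce (T : Set V)).degree v = G.degIn T v := by
  rw [← card_neighborSet_eq_degree, degIn, ← Set.toFinset_card]
  exact card_bij (fun u _ => u.1) (by simp) (by simp) (by simp +contextual)

lemma even_sum_degIn (T : Finset V) : Even (∑ v ∈ T, G.degIn T v) := by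
  rw [← sum_coe_sort T]
  simp_rw [← degree_induce_eq_degIn]
  exact ⟨_, (G.induce (T : Set V)).sum_degrees_eq_twice_card_edges.trans (two_mul _)⟩

-- The hypothesis says `∑ degIn ≥ |T| (|T| - 1) - 1`; both sides being even, every vertex of `T`
-- has `|T| - 1` neighbours in `T`.
lemma isClique_of_card_mul_card_le {T : Finset V}
    (h : T.card * T.card ≤ ∑ v ∈ T, G.degIn T v + T.card + 1) : G.IsClique (T : Set V) := by
  have hsum : ∑ v ∈ T, (G.degIn T v + 1) = ∑ _v ∈ T, T.card := by
    obtain ⟨a, ha⟩ := G.even_sum_degIn T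
    obtain ⟨b, hb⟩ := Nat.even_mul_succ_self T.card
    have := G.sum_degIn_add_card_le T
    rw [Nat.mul_succ] at hb
    rw [sum_add_distrib, ← card_eq_sum_ones, sum_const, smul_eq_mul]
    omega
  intro u hu v hv huv
  have hu' := (sum_eq_sum_iff_of_le fun w hw => G.degIn_lt_card hw).1 hsum u hu
  have hfilter : T.filter (G.Adj u) = T.erase u := by
    refine eq_of_subset_of_card_le (fun w hw => ?_) ?_
    · exact mem_erase.2 ⟨(G.ne_of_adj (mem_filter.1 hw).2).symm, (mem_filter.1 hw).1⟩
    · rw [card_erase_of_mem hu]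
      change T.card - 1 ≤ G.degIn T u
      omega
  exact (mem_filter.1 (hfilter ▸ mem_erase.2 ⟨huv.symm, hv⟩)).2

variable {G} in
lemma IsClique.subset_of_degIn_le_one {K M D : Finset V} (hK : G.IsClique (K : Set V))
    (hM : ∀ v ∉ M, G.degIn M v ≤ 1) (hDM : D ⊆ M) (hDK : D ⊆ K) (hD : D.card = 2) : K ⊆ M := by
  intro y hy
  by_contra hyM
  have hadj : ∀ a ∈ D, G.Adj y a := fun a ha =>
    hK hy (hDK ha) fun hya => hyM (hya ▸ hDM ha)
  have := G.card_le_degIn hDM hadj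
  have := hM y hyM
  omega

lemma card_cliqueFinset_two_le : (G.cliqueFinset 2).card ≤ G.edgeFinset.card := by
  refine card_le_card_of_surjOn Sym2.toFinset fun D hD => ?_
  have hD := mem_cliqueFinset_iff.1 hD
  obtain ⟨a, b, hab, rfl⟩ := card_eq_two.1 hD.card_eq
  exact ⟨s(a, b), mem_edgeFinset.2 (hD.isClique (by simp) (by simp) hab), Sym2.toFinset_mk_eq⟩

variable {G} {Δ : ℕ}

lemma IsRegularOfDegree.degIn_add_degOut (hreg : G.IsRegularOfDegree Δ) (S : Finset V) (v : V) :
    G.degIn S v + G.degOut S v = Δ := by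
  rw [← hreg v, ← card_neighborFinset_eq_degree, degIn, degOut,
    ← card_union_of_disjoint (disjoint_filter_filter disjoint_compl_right), ← filter_union,
    union_compl]
  congr 1
  ext
  simp

lemma IsRegularOfDegree.sum_degIn_add_sum_degOut (hreg : G.IsRegularOfDegree Δ) (T : Finset V) :
    ∑ v ∈ T, G.degIn T v + ∑ v ∈ T, G.degOut T v = T.card * Δ := by
  rw [← sum_add_distrib, sum_congr rfl fun v _ => hreg.degIn_add_degOut T v, sum_const,
    smul_eq_mul]

lemma IsRegularOfDegree.le_card_and_adj_of_card_le (hreg : G.IsRegularOfDegree Δ)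
    {X : Finset V} {x w : V} (hx : x ∈ X) (hX : ∀ y, G.Adj x y → y = w ∨ y ∈ X) :
    Δ ≤ X.card ∧ (X.card ≤ Δ → G.Adj x w) := by
  have hsub : (G.neighborFinset x).erase w ⊆ X.erase x := fun y hy => by
    obtain ⟨hyw, hxy⟩ := mem_erase.1 hy
    exact mem_erase.2 ⟨(G.ne_of_adj ((mem_neighborFinset G x y).1 hxy)).symm,
      (hX y ((mem_neighborFinset G x y).1 hxy)).resolve_left hyw⟩
  have hcard := (pred_card_le_card_erase.trans (card_le_card hsub)).trans_eq (card_erase_of_mem hx)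
  have hX1 : 1 ≤ X.card := card_pos.2 ⟨x, hx⟩
  rw [card_neighborFinset_eq_degree, hreg x] at hcard
  refine ⟨by omega, fun hXΔ => ?_⟩
  by_contra hxw
  have := card_le_card hsub
  rw [erase_eq_of_notMem (by simpa using hxw), card_neighborFinset_eq_degree, hreg x,
    card_erase_of_mem hx] at this
  omega

lemma IsRegularOfDegree.connected_induce_compl_singleton (hreg : G.IsRegularOfDegree Δ)
    (hΔ : 1 ≤ Δ) (h2 : Fintype.card V ≤ 2 * Δ + 1) (w : V) :
    (G.induce ({w}ᶜ : Set V)).Connected := by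
  classical
  set H := G.induce ({w}ᶜ : Set V)
  -- The component `R a` of `a` has at least `Δ` vertices, and exactly `Δ` only if they are all
  -- adjacent to `w`; two disjoint components would not fit into the `n - 1 ≤ 2Δ` vertices.
  let R (a : ({w}ᶜ : Set V)) : Finset V := {x | ∃ hx : x ≠ w, H.Reachable a ⟨x, hx⟩}
  have hR : ∀ a, ∀ x ∈ R a, ∀ y, G.Adj x y → y = w ∨ y ∈ R a := by
    intro a x hx y hxy
    obtain ⟨hxw, hax⟩ := (mem_filter.1 hx).2
    refine or_iff_not_imp_left.2 fun hyw => mem_filter.2 ⟨mem_univ y, hyw, ?_⟩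
    exact hax.trans (Adj.reachable (show H.Adj ⟨x, hxw⟩ ⟨y, hyw⟩ from hxy))
  have haR : ∀ a, a.1 ∈ R a := fun a => mem_filter.2 ⟨mem_univ _, a.2, Reachable.refl _⟩
  obtain ⟨v, hv⟩ : (G.neighborFinset w).Nonempty := by
    rw [← card_pos, card_neighborFinset_eq_degree, hreg w]; omega
  have hvw : v ≠ w := (G.ne_of_adj ((mem_neighborFinset G w v).1 hv)).symm
  refine (connected_iff _).2 ⟨fun a b => ?_, ⟨⟨v, hvw⟩⟩⟩
  by_contra hab
  have hdisj : Disjoint (R a) (R b) := Finset.disjoint_left.2 fun x hxa hxb => by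
    obtain ⟨_, hax⟩ := (mem_filter.1 hxa).2
    obtain ⟨_, hbx⟩ := (mem_filter.1 hxb).2
    exact hab (hax.trans (Reachable.symm hbx))
  have hsub : R a ∪ R b ⊆ univ.erase w := fun x hx => by
    rcases mem_union.1 hx with hx | hx <;>
      exact mem_erase.2 ⟨(mem_filter.1 hx).2.1, mem_univ x⟩
  have hcard := card_le_card hsub
  rw [card_union_of_disjoint hdisj, card_erase_of_mem (mem_univ w), card_univ] at hcard
  have ha := hreg.le_card_and_adj_of_card_le (haR a) (hR a a.1 (haR a))
  have hb := hreg.le_card_and_adj_of_card_le (haR b) (hR b b.1 (haR b))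
  have hN : R a ∪ R b ⊆ G.neighborFinset w := fun x hx => by
    rw [mem_neighborFinset, G.adj_comm]
    rcases mem_union.1 hx with hx | hx
    · exact (hreg.le_card_and_adj_of_card_le hx (hR a x hx)).2 (by omega)
    · exact (hreg.le_card_and_adj_of_card_le hx (hR b x hx)).2 (by omega)
  have := card_le_card hN
  rw [card_union_of_disjoint hdisj, card_neighborFinset_eq_degree, hreg w] at this
  omega

lemma IsRegularOfDegree.isExactAlliance_sub_two_iff (hreg : G.IsRegularOfDegree Δ)
    {S : Finset V} :
    G.IsExactAlliance S ((Δ : ℤ) - 2) ↔ (G.induce (S : Set V)).Connected ∧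
      (∀ v ∈ S, G.degOut S v ≤ 1) ∧ ∃ v ∈ S, G.degOut S v = 1 := by
  refine and_congr_right fun _ => and_congr (forall₂_congr fun v _ => ?_)
    (exists_congr fun v => and_congr_right fun _ => ?_) <;>
  · have := hreg.degIn_add_degOut S v
    omega

lemma IsRegularOfDegree.isExactAlliance_compl_singleton (hreg : G.IsRegularOfDegree Δ)
    (hΔ : 1 ≤ Δ) (h2 : Fintype.card V ≤ 2 * Δ + 1) (w : V) :
    G.IsExactAlliance {w}ᶜ ((Δ : ℤ) - 2) := by
  obtain ⟨v, hv⟩ : (G.neighborFinset w).Nonempty := by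
    rw [← card_pos, card_neighborFinset_eq_degree, hreg w]; omega
  have hvw : G.Adj v w := ((mem_neighborFinset G w v).1 hv).symm
  rw [hreg.isExactAlliance_sub_two_iff, coe_compl, coe_singleton]
  refine ⟨hreg.connected_induce_compl_singleton hΔ h2 w, fun u _ => ?_, v, by simpa using hvw.ne,
    by simp [degOut_eq_degIn_compl, degIn, filter_singleton, hvw]⟩
  rw [degOut_eq_degIn_compl, compl_compl]
  exact (card_filter_le _ _).trans (card_singleton w).le

lemma IsRegularOfDegree.card_le_allianceCoeff_sub_two (hreg : G.IsRegularOfDegree Δ)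
    (hΔ : 1 ≤ Δ) (h2 : Fintype.card V ≤ 2 * Δ + 1) :
    Fintype.card V ≤ G.allianceCoeff ((Δ : ℤ) - 2) := by
  have hinj : Function.Injective fun w : V => ({w}ᶜ : Finset V) :=
    compl_injective.comp singleton_injective
  rw [allianceCoeff, ← Nat.card_eq_fintype_card, ← Set.ncard_univ,
    ← Set.ncard_image_of_injective _ hinj]
  refine Set.ncard_le_ncard ?_ (Set.toFinite _)
  rintro _ ⟨w, -, rfl⟩
  exact hreg.isExactAlliance_compl_singleton hΔ h2 w

lemma IsRegularOfDegree.three_le_sum_degOut (hreg : G.IsRegularOfDegree Δ) (hΔ : 3 ≤ Δ)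
    (h1 : 2 * Δ ≤ Fintype.card V) (h2 : Fintype.card V ≤ 2 * Δ + 1) {C : Finset V}
    (hC : C.card = Δ + 1) : 3 ≤ ∑ c ∈ C, G.degOut C c := by
  -- Each vertex of `Cᶜ` sends at least `Δ + 1 - |Cᶜ|` edges into `C`, and `|Cᶜ| ∈ {Δ - 1, Δ}`.
  have hZ := card_compl C
  have hsum := hreg.sum_degIn_add_sum_degOut Cᶜ
  have hle := G.sum_degIn_add_card_le Cᶜ
  rw [G.sum_degOut_compl] at hsum
  rcases (show Cᶜ.card = Δ - 1 ∨ Cᶜ.card = Δ by omega) with hz | hz <;> rw [hz] at hsum hle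
  · obtain ⟨k, rfl⟩ : ∃ k, Δ = k + 1 := ⟨Δ - 1, by omega⟩
    simp only [add_tsub_cancel_right] at hsum hle
    nlinarith
  · nlinarith

lemma IsRegularOfDegree.degOut_add_card_le (hreg : G.IsRegularOfDegree Δ) {A C : Finset V}
    {c : V} (hAC : A ⊆ C) (hadj : ∀ a ∈ A, G.Adj c a) : G.degOut C c + A.card ≤ Δ := by
  have := G.card_le_degIn hAC hadj
  have := hreg.degIn_add_degOut C c
  omega

-- `K ∪ K'` would be a set of `Δ + 1` vertices with at most two edges leaving it.
lemma IsRegularOfDegree.eq_of_isNClique_of_pair_subset (hreg : G.IsRegularOfDegree Δ)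
    (hΔ : 3 ≤ Δ) (h1 : 2 * Δ ≤ Fintype.card V) (h2 : Fintype.card V ≤ 2 * Δ + 1)
    {K K' D : Finset V} (hK : G.IsNClique Δ K) (hK' : G.IsNClique Δ K') (hDK : D ⊆ K)
    (hDK' : D ⊆ K') (hD : D.card = 2) : K = K' := by
  by_contra hne
  have hinter : ∀ c ∈ K ∩ K', G.degOut (K ∪ K') c + (K ∪ K').card ≤ Δ + 1 := fun c hc => by
    have := hreg.degOut_add_card_le (erase_subset c _) fun x hx => by
      obtain ⟨hxc, hx⟩ := mem_erase.1 hx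
      rcases mem_union.1 hx with hx | hx
      · exact hK.isClique (mem_inter.1 hc).1 hx hxc.symm
      · exact hK'.isClique (mem_inter.1 hc).2 hx hxc.symm
    rw [card_erase_of_mem (inter_subset_union hc)] at this
    omega
  have hout : ∀ c ∈ K ∪ K', G.degOut (K ∪ K') c ≤ 1 := fun c hc => by
    obtain ⟨L, hL, hLC, hcL⟩ : ∃ L, G.IsNClique Δ L ∧ L ⊆ K ∪ K' ∧ c ∈ L :=
      (mem_union.1 hc).elim (fun h => ⟨K, hK, subset_union_left, h⟩)
        (fun h => ⟨K', hK', subset_union_right, h⟩)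
    have := hreg.degOut_add_card_le ((erase_subset c L).trans hLC)
      fun x hx => hL.isClique hcL (mem_of_mem_erase hx) (ne_of_mem_erase hx).symm
    rw [card_erase_of_mem hcL, hL.card_eq] at this
    omega
  obtain ⟨u, hu⟩ : (K ∩ K').Nonempty := (card_pos.1 (by omega)).mono (subset_inter hDK hDK')
  have hClt : Δ < (K ∪ K').card := by
    rw [← hK.card_eq]
    refine card_lt_card (ssubset_of_subset_of_ne subset_union_left fun hKC => hne ?_)
    exact (eq_of_subset_of_card_le (show K' ⊆ K from hKC ▸ subset_union_right)
      (by rw [hK.card_eq, hK'.card_eq])).symm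
  have hCI : ((K ∪ K') \ (K ∩ K')).card = 2 := by
    have := card_union_add_card_inter K K'
    have := hinter u hu
    rw [card_sdiff_of_subset inter_subset_union]
    rw [hK.card_eq, hK'.card_eq] at *
    omega
  have hsum : ∑ c ∈ K ∪ K', G.degOut (K ∪ K') c ≤ 2 := by
    rw [← sum_sdiff inter_subset_union, sum_eq_zero (s := K ∩ K') fun c hc => by
      have := hinter c hc; omega, add_zero, ← hCI]
    simpa using sum_le_card_nsmul _ _ 1 fun c hc => hout c (mem_sdiff.1 hc).1
  have := hreg.three_le_sum_degOut hΔ h1 h2 (C := K ∪ K') (by have := hinter u hu; omega)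
  omega

lemma IsRegularOfDegree.isNClique_or_isClique_compl (hreg : G.IsRegularOfDegree Δ)
    (hΔ : 3 ≤ Δ) (h1 : 2 * Δ ≤ Fintype.card V) (h2 : Fintype.card V ≤ 2 * Δ + 1)
    {S : Finset V} (hS : G.IsExactAlliance S ((Δ : ℤ) - 2)) :
    G.IsNClique Δ S ∨ G.IsClique ((Sᶜ : Finset V) : Set V) ∧ (Sᶜ.card ≤ 3 ∨ Sᶜ.card = Δ) := by
  obtain ⟨-, hout, v, hv, -⟩ := hreg.isExactAlliance_sub_two_iff.1 hS
  have hX : ∑ u ∈ S, G.degOut S u ≤ S.card := by simpa using sum_le_card_nsmul S _ 1 hout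
  have hst := card_add_card_compl S
  have hSsum := hreg.sum_degIn_add_sum_degOut S
  have hTsum := hreg.sum_degIn_add_sum_degOut Sᶜ
  have hTle := G.sum_degIn_add_card_le Sᶜ
  rw [G.sum_degOut_compl] at hTsum
  have hsΔ : Δ ≤ S.card := by
    have := hreg.degIn_add_degOut S v
    have := G.degIn_lt_card hv
    have := hout v hv
    omega
  by_cases hs : S.card = Δ
  · refine Or.inl ⟨G.isClique_of_card_mul_card_le ?_, hs⟩
    have : S.card * S.card = S.card * Δ := by rw [hs]
    omega
  -- With `t = |Sᶜ|` and `D = ∑ degIn Sᶜ`: `t Δ = D + e(S, Sᶜ) ≤ D + (n - t)`. With `D ≤ t (t - 1)`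
  -- this rules out `4 ≤ t < Δ`, and for `t ≤ 3` or `t = Δ` it gives `D ≥ t (t - 1) - 1`.
  have key : Sᶜ.card * Sᶜ.card ≤ ∑ u ∈ Sᶜ, G.degIn Sᶜ u + Sᶜ.card + 1 ∧
      (Sᶜ.card ≤ 3 ∨ Sᶜ.card = Δ) := by
    generalize Sᶜ.card = t at *
    generalize ∑ u ∈ Sᶜ, G.degIn Sᶜ u = D at *
    have ht : t ≤ 3 ∨ t = Δ := by
      by_contra! ht
      have : t + 1 ≤ Δ := by omega
      nlinarith
    refine ⟨?_, ht⟩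
    rcases ht with ht | rfl
    · interval_cases t <;> omega
    · omega
  exact Or.inr ⟨G.isClique_of_card_mul_card_le key.1, key.2⟩

lemma IsRegularOfDegree.not_isExactAlliance_compl_of_subset_isClique
    (hreg : G.IsRegularOfDegree Δ) {M D : Finset V} (hM : G.IsClique (M : Set V))
    (hM3 : 3 ≤ M.card) (hDM : D ⊆ M) (hD : D.card = 2) :
    ¬ G.IsExactAlliance Dᶜ ((Δ : ℤ) - 2) := by
  intro h
  have hout := (hreg.isExactAlliance_sub_two_iff.1 h).2.1
  simp only [degOut_eq_degIn_compl, compl_compl] at hout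
  have := card_le_card (hM.subset_of_degIn_le_one (M := D)
    (fun v hv => hout v (mem_compl.2 hv)) subset_rfl hDM hD)
  omega

variable (G) in
/-- Apart from single vertices and edges, the cliques which can be an exact `(Δ - 2)`-alliance
or the complement of one. -/
def allianceCliques (Δ : ℕ) : Finset (Finset V) :=
  {T ∈ G.cliqueFinset 3 | ∀ v ∉ T, G.degIn T v ≤ 1} ∪ G.cliqueFinset Δ

lemma isClique_and_three_le_card_of_mem_allianceCliques (hΔ : 3 ≤ Δ) {M : Finset V}
    (hM : M ∈ G.allianceCliques Δ) : G.IsClique (M : Set V) ∧ 3 ≤ M.card := by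
  rcases mem_union.1 hM with hM | hM
  · exact ⟨(mem_cliqueFinset_iff.1 (mem_filter.1 hM).1).isClique,
      (mem_cliqueFinset_iff.1 (mem_filter.1 hM).1).card_eq.ge⟩
  · exact ⟨(mem_cliqueFinset_iff.1 hM).isClique, (mem_cliqueFinset_iff.1 hM).card_eq ▸ hΔ⟩

lemma IsRegularOfDegree.eq_of_pair_subset_of_mem_allianceCliques (hreg : G.IsRegularOfDegree Δ)
    (hΔ : 3 ≤ Δ) (h1 : 2 * Δ ≤ Fintype.card V) (h2 : Fintype.card V ≤ 2 * Δ + 1)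
    {M M' D : Finset V} (hM : M ∈ G.allianceCliques Δ) (hM' : M' ∈ G.allianceCliques Δ)
    (hDM : D ⊆ M) (hDM' : D ⊆ M') (hD : D.card = 2) : M = M' := by
  have hMc := isClique_and_three_le_card_of_mem_allianceCliques hΔ hM
  have hMc' := isClique_and_three_le_card_of_mem_allianceCliques hΔ hM'
  rcases mem_union.1 hM with hT | hK
  · obtain ⟨hT, hsep⟩ := mem_filter.1 hT
    refine (eq_of_subset_of_card_le (hMc'.1.subset_of_degIn_le_one hsep hDM hDM' hD) ?_).symm
    rw [(mem_cliqueFinset_iff.1 hT).card_eq]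
    exact hMc'.2
  rcases mem_union.1 hM' with hT' | hK'
  · obtain ⟨hT', hsep'⟩ := mem_filter.1 hT'
    refine eq_of_subset_of_card_le (hMc.1.subset_of_degIn_le_one hsep' hDM' hDM hD) ?_
    rw [(mem_cliqueFinset_iff.1 hT').card_eq]
    exact hMc.2
  exact hreg.eq_of_isNClique_of_pair_subset hΔ h1 h2 (mem_cliqueFinset_iff.1 hK)
    (mem_cliqueFinset_iff.1 hK') hDM hDM' hD

open Classical in
lemma IsRegularOfDegree.mem_of_isExactAlliance (hreg : G.IsRegularOfDegree Δ) (hΔ : 3 ≤ Δ)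
    (h1 : 2 * Δ ≤ Fintype.card V) (h2 : Fintype.card V ≤ 2 * Δ + 1) {S : Finset V}
    (hS : G.IsExactAlliance S ((Δ : ℤ) - 2)) :
    S ∈ univ.image (fun w : V => ({w}ᶜ : Finset V)) ∪
      ({D ∈ G.cliqueFinset 2 | G.IsExactAlliance Dᶜ ((Δ : ℤ) - 2)} ∪ G.allianceCliques Δ).image
        (·ᶜ) ∪ G.allianceCliques Δ := by
  rw [mem_union, mem_union]
  rcases hreg.isNClique_or_isClique_compl hΔ h1 h2 hS with hSK | ⟨hT, ht⟩
  · exact Or.inr (mem_union_right _ (mem_cliqueFinset_iff.2 hSK))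
  obtain ⟨-, hout, v, hv, hv1⟩ := hreg.isExactAlliance_sub_two_iff.1 hS
  have ht1 : 1 ≤ Sᶜ.card := hv1 ▸ card_filter_le _ _
  obtain ht | ht | ht | ht : Sᶜ.card = 1 ∨ Sᶜ.card = 2 ∨ Sᶜ.card = 3 ∨ Sᶜ.card = Δ := by omega
  · obtain ⟨w, hw⟩ := card_eq_one.1 ht
    exact Or.inl (Or.inl (mem_image.2 ⟨w, mem_univ w, by rw [← hw, compl_compl]⟩))
  all_goals refine Or.inl (Or.inr (mem_image.2 ⟨Sᶜ, ?_, compl_compl S⟩))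
  · exact mem_union_left _ (mem_filter.2 ⟨mem_cliqueFinset_iff.2 ⟨hT, ht⟩, by rwa [compl_compl]⟩)
  · exact mem_union_right _ (mem_union_left _ (mem_filter.2 ⟨mem_cliqueFinset_iff.2 ⟨hT, ht⟩,
      fun u hu => hout u (by simpa using hu)⟩))
  · exact mem_union_right _ (mem_union_right _ (mem_cliqueFinset_iff.2 ⟨hT, ht⟩))

lemma IsRegularOfDegree.allianceCoeff_sub_two_le (hreg : G.IsRegularOfDegree Δ) (hΔ : 3 ≤ Δ)
    (h1 : 2 * Δ ≤ Fintype.card V) (h2 : Fintype.card V ≤ 2 * Δ + 1) :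
    G.allianceCoeff ((Δ : ℤ) - 2) ≤ Fintype.card V + G.edgeFinset.card := by
  classical
  set F := G.allianceCliques Δ
  set good := {D ∈ G.cliqueFinset 2 | G.IsExactAlliance Dᶜ ((Δ : ℤ) - 2)}
  set bad := {D ∈ G.cliqueFinset 2 | ¬ G.IsExactAlliance Dᶜ ((Δ : ℤ) - 2)}
  have hbad : 3 * F.card ≤ bad.card := by
    refine (three_mul_card_le_card_biUnion_powersetCard_two
      (fun M hM => (isClique_and_three_le_card_of_mem_allianceCliques hΔ hM).2)
      fun M hM M' hM' D => hreg.eq_of_pair_subset_of_mem_allianceCliques hΔ h1 h2 hM hM').trans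
      (card_le_card fun D hD => ?_)
    obtain ⟨M, hM, hDM⟩ := mem_biUnion.1 hD
    obtain ⟨hDM, hD2⟩ := mem_powersetCard.1 hDM
    obtain ⟨hMc, hM3⟩ := isClique_and_three_le_card_of_mem_allianceCliques hΔ hM
    exact mem_filter.2 ⟨mem_cliqueFinset_iff.2 ⟨hMc.subset hDM, hD2⟩,
      hreg.not_isExactAlliance_compl_of_subset_isClique hMc hM3 hDM hD2⟩
  have hedges : good.card + bad.card ≤ G.edgeFinset.card :=
    (card_filter_add_card_filter_not _).trans_le G.card_cliqueFinset_two_le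
  calc G.allianceCoeff ((Δ : ℤ) - 2)
      ≤ (univ.image (fun w : V => ({w}ᶜ : Finset V)) ∪ (good ∪ F).image (·ᶜ) ∪ F).card :=
        (Set.ncard_le_ncard fun S hS => hreg.mem_of_isExactAlliance hΔ h1 h2 hS).trans_eq
          (Set.ncard_coe_finset _)
    _ ≤ Fintype.card V + (good.card + F.card) + F.card := by
      grw [card_union_le, card_union_le, card_image_le, card_image_le, card_union_le, card_univ]
    _ ≤ Fintype.card V + G.edgeFinset.card := by omega

end SimpleGraph

/-- For a Δ-regular graph with `Δ ≥ 3`, `2Δ ≤ n ≤ 2Δ+1`, order `n` and size `m`: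
`n ≤ A_{Δ-2}(G) ≤ n + m + 2`. -/
theorem allianceCoeff_maxDeg_sub_two_bounds
    {V : Type*} [Fintype V] [DecidableEq V]
    (G : SimpleGraph V) [DecidableRel G.Adj] (Δ : ℕ)
    (hreg : G.IsRegularOfDegree Δ) (hΔ : 3 ≤ Δ)
    (h1 : 2 * Δ ≤ Fintype.card V) (h2 : Fintype.card V ≤ 2 * Δ + 1) :
    Fintype.card V ≤ G.allianceCoeff ((Δ : ℤ) - 2) ∧
    G.allianceCoeff ((Δ : ℤ) - 2) ≤ Fintype.card V + G.edgeFinset.card + 2 :=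
  ⟨hreg.card_le_allianceCoeff_sub_two (by omega) h2,
    (hreg.allianceCoeff_sub_two_le hΔ h1 h2).trans (Nat.le_add_right _ 2)⟩
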